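/- Let D and D' be two non-trivial (v,b,r,k,λ)-BIBDs with the same parameters v, b, r, k, λ and with v ≤ b. Then the flag-graphs Γ₁(D) and Γ₁(D') are cospectral: the real adjacency matrices of Γ₁(D) and Γ₁(D') have equal characteristic polynomials. -/

import Mathlib

/-- A `(v,b,r,k,lam)`-balanced incomplete block design: a finite set of `v` points and a
family of `b` distinct blocks, each block a `k`-element subset of the points with
`1 < k < v`, such that every point lies in exactly `r` blocks and every pair of distinct
points is contained in exactly `lam` blocks (all parameters positive). -/
structure BIBD (v b r k lam : ℕ) where
  P : Type
  [fintypeP : Fintype P]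
  [decEqP : DecidableEq P]
  blocks : Finset (Finset P)
  card_points : Fintype.card P = v
  card_blocks : blocks.card = b
  block_size : ∀ c ∈ blocks, c.card = k
  one_lt_k : 1 < k
  k_lt_v : k < v
  lam_pos : 0 < lam
  point_deg : ∀ p : P, (blocks.filter (fun c => p ∈ c)).card = r
  pair_deg : ∀ p q : P, p ≠ q → (blocks.filter (fun c => p ∈ c ∧ q ∈ c)).card = lam

attribute [instance] BIBD.fintypeP BIBD.decEqP

variable {v b r k lam : ℕ}

/-- A flag of a BIBD: an incident point-block pair `(p, c)` with `p ∈ c`. -/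
def BIBD.Flag (D : BIBD v b r k lam) : Type :=
  {pc : D.P × Finset D.P // pc.2 ∈ D.blocks ∧ pc.1 ∈ pc.2}

instance (D : BIBD v b r k lam) : Fintype D.Flag :=
  inferInstanceAs (Fintype {pc : D.P × Finset D.P // pc.2 ∈ D.blocks ∧ pc.1 ∈ pc.2})

instance (D : BIBD v b r k lam) : DecidableEq D.Flag :=
  inferInstanceAs (DecidableEq {pc : D.P × Finset D.P // pc.2 ∈ D.blocks ∧ pc.1 ∈ pc.2})

/-- The flag-graph `Γ₁(D)`: vertices are the flags of `D`; two distinct flags `(p,c)` and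
`(q,d)` are adjacent iff `p = q` or `c = d`. -/
def BIBD.Gamma1 (D : BIBD v b r k lam) : SimpleGraph D.Flag where
  Adj x y := x ≠ y ∧ (x.1.1 = y.1.1 ∨ x.1.2 = y.1.2)
  symm := ⟨fun _ _ h => ⟨h.1.symm, h.2.imp Eq.symm Eq.symm⟩⟩
  loopless := ⟨fun _ h => h.1 rfl⟩

instance (D : BIBD v b r k lam) : DecidableRel D.Gamma1.Adj :=
  fun x y => inferInstanceAs (Decidable (x ≠ y ∧ (x.1.1 = y.1.1 ∨ x.1.2 = y.1.2)))

/-!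
Let `F` be the incidence matrix between flags and points ⊕ blocks, and `N` the point-block
incidence matrix. Then `F Fᵀ = A + 2 I` for the adjacency matrix `A` of `Γ₁(D)`, while
`Fᵀ F = [[r I, N], [Nᵀ, k I]]`. The products `F Fᵀ` and `Fᵀ F` share their characteristic
polynomial up to a power of `X`, and a Schur complement expresses that of `Fᵀ F` through the
characteristic polynomial of `N Nᵀ = (r - λ) I + λ J`, which depends only on the parameters.
-/

open Matrix Polynomial

namespace Matrix

variable {m n R : Type*} [Fintype m] [Fintype n] [DecidableEq m] [DecidableEq n] [CommRing R]

theorem det_fromBlocks_scalar₂₂_mul (A : Matrix m m R) (B : Matrix m n R) (C : Matrix n m R)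
    (c : R) :
    (fromBlocks A B C (scalar n c)).det * c ^ Fintype.card m
      = (c • A - B * C).det * c ^ Fintype.card n := by
  -- right-multiplying by a block-triangular matrix avoids inverting `c`
  have h : fromBlocks A B C (scalar n c) * fromBlocks (scalar m c) 0 (-C) 1
      = fromBlocks (c • A - B * C) B 0 (scalar n c) := by
    simp [fromBlocks_multiply, sub_eq_add_neg, ← smul_one_eq_diagonal]
  simpa [det_fromBlocks_zero₁₂, det_fromBlocks_zero₂₁] using congrArg det h

theorem charpoly_comp_eq_det (M : Matrix n n R) (q : R[X]) :
    M.charpoly.comp q = (scalar n q - M.map C).det := by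
  rw [charpoly, ← coe_compRingHom_apply, RingHom.map_det]
  congr 1
  ext i j : 1
  by_cases h : i = j
  · subst h; simp
  · simp [h]

theorem charpoly_fromBlocks_scalar (A : Matrix m n R) (B : Matrix n m R) (a d : R) :
    (fromBlocks (scalar m a) A B (scalar n d)).charpoly * (X - C d) ^ Fintype.card m
      = (X - C d) ^ Fintype.card n * (A * B).charpoly.comp ((X - C a) * (X - C d)) := by
  have hchar : charmatrix (fromBlocks (scalar m a) A B (scalar n d))
      = fromBlocks (scalar m (X - C a)) (-A.map C) (-B.map C) (scalar n (X - C d)) := by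
    rw [charmatrix_fromBlocks]
    congr 1 <;> ext i j <;> by_cases h : i = j <;> simp [h]
  rw [charpoly, hchar, det_fromBlocks_scalar₂₂_mul, charpoly_comp_eq_det, mul_comm,
    Matrix.neg_mul, Matrix.mul_neg, neg_neg, ← Matrix.map_mul, scalar_apply, scalar_apply,
    ← diagonal_smul]
  simp only [Pi.smul_def, smul_eq_mul, mul_comm]

end Matrix

namespace BIBD

variable (D : BIBD v b r k lam)

def incidence : Matrix D.P D.blocks ℝ := of fun p c => if p ∈ (c : Finset D.P) then 1 else 0

def flagPoint : Matrix D.Flag D.P ℝ := of fun x p => if x.1.1 = p then 1 else 0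

def flagBlock : Matrix D.Flag D.blocks ℝ := of fun x c => if x.1.2 = c then 1 else 0

theorem sum_flag {M : Type*} [AddCommMonoid M] (f : D.P → Finset D.P → M) :
    ∑ x : D.Flag, f x.1.1 x.1.2 = ∑ c ∈ D.blocks, ∑ p ∈ c, f p c :=
  (Finset.sum_subtype
    (Finset.univ.filter fun pc : D.P × Finset D.P => pc.2 ∈ D.blocks ∧ pc.1 ∈ pc.2)
    (fun _ => Finset.mem_filter_univ _) fun pc => f pc.1 pc.2).symm.trans
    (Finset.sum_finset_product_right' _ _ _ (by simp))

theorem card_flag : Fintype.card D.Flag = b * k := by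
  rw [Fintype.card_eq_sum_ones, D.sum_flag fun _ _ => 1]
  simp (disch := assumption) [D.block_size, D.card_blocks]

theorem flagPoint_transpose_mul_self : D.flagPointᵀ * D.flagPoint = scalar D.P (r : ℝ) := by
  ext p q
  rw [scalar_apply, diagonal_apply, mul_apply]
  simp only [transpose_apply, flagPoint, of_apply]
  rw [D.sum_flag fun p' _ => (if p' = p then (1 : ℝ) else 0) * if p' = q then 1 else 0]
  by_cases h : p = q
  · subst h; simp [Finset.sum_boole, D.point_deg]
  · simp [Finset.sum_ite_eq', h, Ne.symm h]

theorem flagBlock_transpose_mul_self :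
    D.flagBlockᵀ * D.flagBlock = scalar D.blocks (k : ℝ) := by
  ext c d
  rw [scalar_apply, diagonal_apply, mul_apply]
  simp only [transpose_apply, flagBlock, of_apply]
  rw [D.sum_flag fun _ c' => (if c' = c then (1 : ℝ) else 0) * if c' = d then 1 else 0]
  by_cases h : c = d
  · subst h; simp [D.block_size]
  · simp [Finset.sum_ite_eq', h, Ne.symm h]

theorem flagPoint_transpose_mul_flagBlock : D.flagPointᵀ * D.flagBlock = D.incidence := by
  ext p c
  simp only [mul_apply, transpose_apply, flagPoint, flagBlock, of_apply]
  rw [D.sum_flag fun p' c' => (if p' = p then (1 : ℝ) else 0) * if c' = c then 1 else 0]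
  simp [incidence, Finset.sum_ite_eq']

theorem incidence_mul_transpose :
    D.incidence * D.incidenceᵀ = scalar D.P ((r : ℝ) - lam) + of fun _ _ => (lam : ℝ) := by
  ext p q
  rw [Matrix.add_apply, scalar_apply, diagonal_apply, mul_apply]
  simp only [transpose_apply, incidence, of_apply, ite_zero_mul_ite_zero]
  rw [Finset.sum_coe_sort D.blocks fun c => if p ∈ c ∧ q ∈ c then (1 : ℝ) * 1 else 0]
  by_cases h : p = q
  · subst h; simp [Finset.sum_boole, D.point_deg]
  · simp [Finset.sum_boole, D.pair_deg p q h, h]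

def flagIncidence : Matrix D.Flag (D.P ⊕ D.blocks) ℝ := fromCols D.flagPoint D.flagBlock

theorem flagPoint_mul_transpose :
    D.flagPoint * D.flagPointᵀ = of fun x y => if x.1.1 = y.1.1 then 1 else 0 := by
  ext x y
  simp [mul_apply, flagPoint, Finset.sum_ite_eq]

theorem flagBlock_mul_transpose :
    D.flagBlock * D.flagBlockᵀ = of fun x y => if x.1.2 = y.1.2 then 1 else 0 := by
  ext x y
  simp only [mul_apply, transpose_apply, flagBlock, of_apply]
  rw [Finset.sum_coe_sort D.blocks fun c =>
    (if x.1.2 = c then (1 : ℝ) else 0) * if y.1.2 = c then 1 else 0]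
  simp [Finset.sum_ite_eq, y.2.1]

theorem flagIncidence_mul_transpose :
    D.flagIncidence * D.flagIncidenceᵀ = D.Gamma1.adjMatrix ℝ + scalar D.Flag 2 := by
  rw [flagIncidence, transpose_fromCols, fromCols_mul_fromRows, flagPoint_mul_transpose,
    flagBlock_mul_transpose]
  ext x y
  simp only [Matrix.add_apply, of_apply, scalar_apply, diagonal_apply,
    SimpleGraph.adjMatrix_apply]
  by_cases h : x = y
  · subst h; norm_num
  · have hadj : D.Gamma1.Adj x y ↔ x.1.1 = y.1.1 ∨ x.1.2 = y.1.2 := and_iff_right h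
    have hne : ¬(x.1.1 = y.1.1 ∧ x.1.2 = y.1.2) := fun h' =>
      h (Subtype.ext (Prod.ext h'.1 h'.2))
    rw [if_congr hadj rfl rfl, if_neg h]
    by_cases h1 : x.1.1 = y.1.1 <;> by_cases h2 : x.1.2 = y.1.2 <;> simp_all

theorem transpose_mul_flagIncidence :
    D.flagIncidenceᵀ * D.flagIncidence
      = fromBlocks (scalar D.P (r : ℝ)) D.incidence D.incidenceᵀ
          (scalar D.blocks (k : ℝ)) := by
  rw [flagIncidence, transpose_fromCols, fromRows_mul_fromCols, flagPoint_transpose_mul_self,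
    flagBlock_transpose_mul_self, ← flagPoint_transpose_mul_flagBlock, transpose_mul,
    transpose_transpose]

theorem charpoly_transpose_mul_flagIncidence :
    (D.flagIncidenceᵀ * D.flagIncidence).charpoly * (X - C (k : ℝ)) ^ v
      = (X - C (k : ℝ)) ^ b *
          (scalar (Fin v) ((r : ℝ) - lam) + of fun _ _ => (lam : ℝ)).charpoly.comp
            ((X - C (r : ℝ)) * (X - C (k : ℝ))) := by
  have e : D.P ≃ Fin v := Fintype.equivFinOfCardEq D.card_points
  have h := charpoly_fromBlocks_scalar D.incidence D.incidenceᵀ (r : ℝ) (k : ℝ)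
  rw [D.card_points, Fintype.card_coe, D.card_blocks] at h
  rw [transpose_mul_flagIncidence, h, incidence_mul_transpose, ← charpoly_reindex e]
  congr
  ext i j
  simp [scalar_apply, diagonal_apply]

theorem charpoly_adjMatrix_gamma1 :
    (D.Gamma1.adjMatrix ℝ).charpoly
      = (D.flagIncidence * D.flagIncidenceᵀ).charpoly.comp (X + C 2) := by
  rw [← charpoly_sub_scalar, flagIncidence_mul_transpose, add_sub_cancel_right]

theorem X_pow_mul_charpoly_flagIncidence_mul_transpose :
    X ^ (v + b) * (D.flagIncidence * D.flagIncidenceᵀ).charpoly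
      = X ^ (b * k) * (D.flagIncidenceᵀ * D.flagIncidence).charpoly := by
  have h := charpoly_mul_comm' D.flagIncidence D.flagIncidenceᵀ
  rwa [Fintype.card_sum, D.card_flag, Fintype.card_coe, D.card_points, D.card_blocks] at h

end BIBD

theorem flagGraphs_cospectral_general (D D' : BIBD v b r k lam) :
    (D.Gamma1.adjMatrix ℝ).charpoly = (D'.Gamma1.adjMatrix ℝ).charpoly := by
  have hgram : (D.flagIncidenceᵀ * D.flagIncidence).charpoly
      = (D'.flagIncidenceᵀ * D'.flagIncidence).charpoly :=
    mul_right_cancel₀ (pow_ne_zero v (X_sub_C_ne_zero (k : ℝ))) (by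
      rw [D.charpoly_transpose_mul_flagIncidence, D'.charpoly_transpose_mul_flagIncidence])
  have hflag : (D.flagIncidence * D.flagIncidenceᵀ).charpoly
      = (D'.flagIncidence * D'.flagIncidenceᵀ).charpoly :=
    (isRegular_X_pow (v + b)).left (by
      simp only [BIBD.X_pow_mul_charpoly_flagIncidence_mul_transpose, hgram])
  rw [D.charpoly_adjMatrix_gamma1, D'.charpoly_adjMatrix_gamma1, hflag]

/-- The flag-graphs of two non-trivial BIBDs with the same parameters are cospectral:
their real adjacency matrices have equal characteristic polynomials. -/
theorem flagGraphs_cospectral (D D' : BIBD v b r k lam) (hnt : 1 < v - k) (hvb : v ≤ b) :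
    (D.Gamma1.adjMatrix ℝ).charpoly = (D'.Gamma1.adjMatrix ℝ).charpoly :=
  flagGraphs_cospectral_general D D'
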